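/- For a finite MDP with reward r ∈ ℝ^{S×A}, the RL objective satisfies max over policies π of ⟨μ_π, r⟩ = max over μ ∈ M of ⟨μ, r⟩, where M is the Bellman flow polytope. In particular, the RL problem is a linear program over M. -/

import Mathlib

noncomputable section
open scoped BigOperators

def IsDist {X : Type*} [Fintype X] (p : X → ℝ) : Prop :=
  (∀ x, 0 ≤ p x) ∧ ∑ x, p x = 1

def IsPolicy {S A : Type*} [Fintype A] (π : S → A → ℝ) : Prop :=
  ∀ s, IsDist (π s)

def IsKernel {S A : Type*} [Fintype S] (P : S → A → S → ℝ) : Prop :=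
  ∀ s a, IsDist (P s a)

/-- Probability of (S_t = s, A_t = a) under policy `π`, kernel `P`, initial law `ρ0`. -/
def saDist {S A : Type*} [Fintype S] [Fintype A] (P : S → A → S → ℝ) (π : S → A → ℝ)
    (ρ0 : S → ℝ) : ℕ → S → A → ℝ
  | 0 => fun s a => ρ0 s * π s a
  | (t + 1) => fun s a => π s a * ∑ s' : S, ∑ a' : A, P s' a' s * saDist P π ρ0 t s' a'

/-- Discounted state-action occupancy measure of policy `π`. -/
def occ {S A : Type*} [Fintype S] [Fintype A] (γ : ℝ) (P : S → A → S → ℝ)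
    (π : S → A → ℝ) (ρ0 : S → ℝ) (s : S) (a : A) : ℝ :=
  (1 - γ) * ∑' t : ℕ, γ ^ t * saDist P π ρ0 t s a

/-- The Bellman flow constraint set `M`. -/
def InFlow {S A : Type*} [Fintype S] [Fintype A] (γ : ℝ) (P : S → A → S → ℝ)
    (ρ0 : S → ℝ) (μ : S → A → ℝ) : Prop :=
  IsDist (fun p : S × A => μ p.1 p.2) ∧
  ∀ s, ∑ a, μ s a = (1 - γ) * ρ0 s + γ * ∑ s' : S, ∑ a' : A, P s' a' s * μ s' a'


/-!
Every occupancy measure satisfies the Bellman flow equations: shift the time index in the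
series defining it. Conversely a flow `μ` is the occupancy measure of the policy
`π(a | s) = μ(s, a) / ∑_b μ(s, b)`: both `μ` and `μ_π` factor through `π`, so their state
marginals are fixed points of `ν ↦ (1 - γ) ρ₀ + γ P_πᵀ ν`, which is a `γ`-contraction in `ℓ¹`.
Hence both objectives range over the same set of values, the image of the compact polytope `M`
under a linear map, and this set has a greatest element.
-/

section

open Finset

variable {X : Type*} [Fintype X]

lemma IsDist.le_one {p : X → ℝ} (hp : IsDist p) (x : X) : p x ≤ 1 :=
  hp.2 ▸ single_le_sum (fun y _ => hp.1 y) (mem_univ x)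

lemma isDist_uniform [Nonempty X] : IsDist fun _ : X => (Fintype.card X : ℝ)⁻¹ := by
  refine ⟨fun _ => by positivity, ?_⟩
  rw [sum_const, card_univ, nsmul_eq_mul,
    mul_inv_cancel₀ (Nat.cast_ne_zero.2 Fintype.card_ne_zero)]

section policyOfFlow

variable {S A : Type*} [Fintype A]

def policyOfFlow (μ : S → A → ℝ) (s : S) (a : A) : ℝ :=
  if ∑ b, μ s b = 0 then (Fintype.card A : ℝ)⁻¹ else μ s a / ∑ b, μ s b

lemma isPolicy_policyOfFlow [Nonempty A] {μ : S → A → ℝ} (hμ : ∀ s a, 0 ≤ μ s a) :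
    IsPolicy (policyOfFlow μ) := by
  intro s
  by_cases h : ∑ b, μ s b = 0
  · have : policyOfFlow μ s = fun _ => (Fintype.card A : ℝ)⁻¹ := funext fun _ => if_pos h
    exact this ▸ isDist_uniform
  · have : policyOfFlow μ s = fun a => μ s a / ∑ b, μ s b := funext fun _ => if_neg h
    rw [this]
    exact ⟨fun a => div_nonneg (hμ s a) (sum_nonneg fun b _ => hμ s b),
      by rw [← sum_div, div_self h]⟩

lemma eq_policyOfFlow_mul_sum {μ : S → A → ℝ} (hμ : ∀ s a, 0 ≤ μ s a) (s : S) (a : A) :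
    μ s a = policyOfFlow μ s a * ∑ b, μ s b := by
  by_cases h : ∑ b, μ s b = 0
  · rw [h, mul_zero]
    exact (sum_eq_zero_iff_of_nonneg fun b _ => hμ s b).1 h a (mem_univ a)
  · simp only [policyOfFlow, h, if_false, div_mul_cancel₀ _ h]

end policyOfFlow

variable {S A : Type*} [Fintype S] [Fintype A]

lemma IsKernel.sum_sum_sum_mul {P : S → A → S → ℝ} (hP : IsKernel P) (f : S → A → ℝ) :
    ∑ s, ∑ s', ∑ a', P s' a' s * f s' a' = ∑ s', ∑ a', f s' a' := by
  rw [sum_comm]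
  refine sum_congr rfl fun s' _ => ?_
  rw [sum_comm]
  refine sum_congr rfl fun a' _ => ?_
  rw [← sum_mul, (hP s' a').2, one_mul]

variable {γ : ℝ} {P : S → A → S → ℝ} {π : S → A → ℝ} {ρ0 : S → ℝ}

lemma saDist_eq_mul_sum (hπ : IsPolicy π) (t : ℕ) (s : S) (a : A) :
    saDist P π ρ0 t s a = π s a * ∑ b, saDist P π ρ0 t s b := by
  cases t with
  | zero =>
    simp only [saDist]
    rw [← mul_sum, (hπ s).2, mul_one, mul_comm]
  | succ t => simp only [saDist, ← sum_mul, (hπ s).2, one_mul]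

lemma sum_saDist_zero (hπ : IsPolicy π) (s : S) : ∑ a, saDist P π ρ0 0 s a = ρ0 s := by
  simp only [saDist, ← mul_sum, (hπ s).2, mul_one]

lemma sum_saDist_succ (hπ : IsPolicy π) (t : ℕ) (s : S) :
    ∑ a, saDist P π ρ0 (t + 1) s a = ∑ s', ∑ a', P s' a' s * saDist P π ρ0 t s' a' := by
  simp only [saDist, ← sum_mul, (hπ s).2, one_mul]

lemma isDist_saDist (hP : IsKernel P) (hπ : IsPolicy π) (hρ0 : IsDist ρ0) (t : ℕ) :
    IsDist fun p : S × A => saDist P π ρ0 t p.1 p.2 := by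
  rw [IsDist, Fintype.sum_prod_type]
  induction t with
  | zero =>
    refine ⟨fun p => mul_nonneg (hρ0.1 _) ((hπ _).1 _), ?_⟩
    simp_rw [sum_saDist_zero hπ]
    exact hρ0.2
  | succ t ih =>
    refine ⟨fun p => mul_nonneg ((hπ _).1 _) (sum_nonneg fun s' _ => sum_nonneg fun a' _ =>
      mul_nonneg ((hP _ _).1 _) (ih.1 (s', a'))), ?_⟩
    simp_rw [sum_saDist_succ hπ, hP.sum_sum_sum_mul]
    exact ih.2

lemma summable_pow_mul_saDist (hγ0 : 0 ≤ γ) (hγ1 : γ < 1) (hP : IsKernel P) (hπ : IsPolicy π)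
    (hρ0 : IsDist ρ0) (s : S) (a : A) : Summable fun t => γ ^ t * saDist P π ρ0 t s a :=
  (summable_geometric_of_lt_one hγ0 hγ1).of_nonneg_of_le
    (fun t => mul_nonneg (pow_nonneg hγ0 t) ((isDist_saDist hP hπ hρ0 t).1 (s, a)))
    (fun t => mul_le_of_le_one_right (pow_nonneg hγ0 t)
      ((isDist_saDist hP hπ hρ0 t).le_one (s, a)))

lemma hasSum_occ (hγ0 : 0 ≤ γ) (hγ1 : γ < 1) (hP : IsKernel P) (hπ : IsPolicy π)
    (hρ0 : IsDist ρ0) (s : S) (a : A) :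
    HasSum (fun t => (1 - γ) * (γ ^ t * saDist P π ρ0 t s a)) (occ γ P π ρ0 s a) :=
  (summable_pow_mul_saDist hγ0 hγ1 hP hπ hρ0 s a).hasSum.mul_left (1 - γ)

lemma occ_eq_mul_sum (hγ0 : 0 ≤ γ) (hγ1 : γ < 1) (hP : IsKernel P) (hπ : IsPolicy π)
    (hρ0 : IsDist ρ0) (s : S) (a : A) :
    occ γ P π ρ0 s a = π s a * ∑ b, occ γ P π ρ0 s b := by
  refine (hasSum_occ hγ0 hγ1 hP hπ hρ0 s a).unique
    (((hasSum_sum fun b _ => hasSum_occ hγ0 hγ1 hP hπ hρ0 s b).mul_left (π s a)).congr_fun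
      fun t => ?_)
  rw [saDist_eq_mul_sum hπ t s a, ← mul_sum, ← mul_sum]
  ring

theorem inFlow_occ (hγ0 : 0 ≤ γ) (hγ1 : γ < 1) (hP : IsKernel P) (hπ : IsPolicy π)
    (hρ0 : IsDist ρ0) : InFlow γ P ρ0 (occ γ P π ρ0) := by
  have hocc := hasSum_occ hγ0 hγ1 hP hπ hρ0
  refine ⟨⟨fun p => (hocc p.1 p.2).nonneg fun t => ?_, ?_⟩, fun s => ?_⟩
  · exact mul_nonneg (sub_nonneg.2 hγ1.le)
      (mul_nonneg (pow_nonneg hγ0 t) ((isDist_saDist hP hπ hρ0 t).1 p))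
  · have hgeom : HasSum (fun t => (1 - γ) * γ ^ t) 1 := by
      simpa [mul_inv_cancel₀ (sub_ne_zero.2 hγ1.ne')] using
        (hasSum_geometric_of_lt_one hγ0 hγ1).mul_left (1 - γ)
    refine (hasSum_sum fun p _ => hocc p.1 p.2).unique (hgeom.congr_fun fun t => ?_)
    rw [← mul_sum, ← mul_sum, (isDist_saDist hP hπ hρ0 t).2, mul_one]
  · have hshift : HasSum (fun t => ∑ a, (1 - γ) * (γ ^ (t + 1) * saDist P π ρ0 (t + 1) s a))
        (γ * ∑ s', ∑ a', P s' a' s * occ γ P π ρ0 s' a') := by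
      refine ((hasSum_sum fun s' _ => hasSum_sum fun a' _ =>
        (hocc s' a').mul_left (P s' a' s)).mul_left γ).congr_fun fun t => ?_
      rw [← mul_sum, ← mul_sum, sum_saDist_succ hπ, mul_sum, mul_sum, mul_sum]
      refine sum_congr rfl fun s' _ => ?_
      rw [mul_sum, mul_sum, mul_sum]
      exact sum_congr rfl fun a' _ => by ring
    rw [(hasSum_sum fun a _ => hocc s a).unique
      (hshift.zero_add (f := fun t => ∑ a, (1 - γ) * (γ ^ t * saDist P π ρ0 t s a))),
      ← mul_sum, ← mul_sum, sum_saDist_zero hπ, pow_zero, one_mul]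

lemma eq_zero_of_eq_discount_mul_transition (hγ0 : 0 ≤ γ) (hγ1 : γ < 1) (hP : IsKernel P)
    (hπ : IsPolicy π) {D : S → ℝ}
    (hD : ∀ s, D s = γ * ∑ s', ∑ a', P s' a' s * (π s' a' * D s')) : D = 0 := by
  have hle : ∑ s, |D s| ≤ γ * ∑ s, |D s| := calc
    ∑ s, |D s| ≤ ∑ s, γ * ∑ s', ∑ a', P s' a' s * (π s' a' * |D s'|) := by
      refine sum_le_sum fun s _ => ?_
      rw [hD s, abs_mul, abs_of_nonneg hγ0]
      gcongr
      refine (abs_sum_le_sum_abs _ _).trans (sum_le_sum fun s' _ => ?_)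
      refine (abs_sum_le_sum_abs _ _).trans_eq (sum_congr rfl fun a' _ => ?_)
      rw [abs_mul, abs_mul, abs_of_nonneg ((hP s' a').1 s), abs_of_nonneg ((hπ s').1 a')]
    _ = γ * ∑ s, |D s| := by
      rw [← mul_sum, hP.sum_sum_sum_mul]
      simp only [← sum_mul, (hπ _).2, one_mul]
  have hzero : ∑ s, |D s| = 0 :=
    le_antisymm (by nlinarith [sum_nonneg fun s (_ : s ∈ univ) => abs_nonneg (D s)])
      (sum_nonneg fun s _ => abs_nonneg (D s))
  funext s
  exact abs_eq_zero.1
    ((sum_eq_zero_iff_of_nonneg fun s _ => abs_nonneg (D s)).1 hzero s (mem_univ s))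

lemma InFlow.eq_of_eq_mul_sum (hγ0 : 0 ≤ γ) (hγ1 : γ < 1) (hP : IsKernel P) (hπ : IsPolicy π)
    {μ ν : S → A → ℝ} (hμ : InFlow γ P ρ0 μ) (hν : InFlow γ P ρ0 ν)
    (hμπ : ∀ s a, μ s a = π s a * ∑ b, μ s b) (hνπ : ∀ s a, ν s a = π s a * ∑ b, ν s b) :
    μ = ν := by
  have hD := eq_zero_of_eq_discount_mul_transition hγ0 hγ1 hP hπ
    (D := fun s => ∑ b, μ s b - ∑ b, ν s b) fun s => by
      simp only [mul_sub, ← hμπ, ← hνπ, sum_sub_distrib]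
      rw [hμ.2 s, hν.2 s]
      ring
  funext s a
  rw [hμπ, hνπ, sub_eq_zero.1 (congrFun hD s)]

theorem image_occ_eq_setOf_inFlow [Nonempty A] (hγ0 : 0 ≤ γ) (hγ1 : γ < 1) (hP : IsKernel P)
    (hρ0 : IsDist ρ0) : (fun π => occ γ P π ρ0) '' {π | IsPolicy π} = {μ | InFlow γ P ρ0 μ} := by
  ext μ
  constructor
  · rintro ⟨π, hπ, rfl⟩
    exact inFlow_occ hγ0 hγ1 hP hπ hρ0
  · intro hμ
    have hμ0 : ∀ s a, 0 ≤ μ s a := fun s a => hμ.1.1 (s, a)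
    have hπ := isPolicy_policyOfFlow hμ0
    exact ⟨_, hπ, (inFlow_occ hγ0 hγ1 hP hπ hρ0).eq_of_eq_mul_sum hγ0 hγ1 hP hπ hμ
      (occ_eq_mul_sum hγ0 hγ1 hP hπ hρ0) (eq_policyOfFlow_mul_sum hμ0)⟩

lemma isClosed_setOf_inFlow : IsClosed {μ : S → A → ℝ | InFlow γ P ρ0 μ} := by
  simp only [InFlow, IsDist, Set.ofPred_and, Set.ofPred_forall]
  exact ((isClosed_iInter fun p => isClosed_le (by fun_prop) (by fun_prop)).inter
    (isClosed_eq (by fun_prop) (by fun_prop))).inter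
    (isClosed_iInter fun s => isClosed_eq (by fun_prop) (by fun_prop))

lemma isCompact_setOf_inFlow : IsCompact {μ : S → A → ℝ | InFlow γ P ρ0 μ} :=
  (isCompact_univ_pi fun _ => isCompact_univ_pi fun _ => isCompact_Icc).of_isClosed_subset
    isClosed_setOf_inFlow fun _ hμ s _ a _ => ⟨hμ.1.1 (s, a), hμ.1.le_one (s, a)⟩

end

theorem stmt5_general {S A : Type*} [Fintype S] [Fintype A] [Nonempty A]
    (γ : ℝ) (hγ : γ ∈ Set.Ioo (0 : ℝ) 1)
    (P : S → A → S → ℝ) (hP : IsKernel P)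
    (ρ0 : S → ℝ) (hρ0 : IsDist ρ0)
    (r : S → A → ℝ) :
    ∃ v : ℝ,
      IsGreatest {x : ℝ | ∃ π : S → A → ℝ, IsPolicy π ∧
        x = ∑ s : S, ∑ a : A, occ γ P π ρ0 s a * r s a} v ∧
      IsGreatest {x : ℝ | ∃ μ : S → A → ℝ, InFlow γ P ρ0 μ ∧
        x = ∑ s : S, ∑ a : A, μ s a * r s a} v := by
  have hflow : {x | ∃ μ, InFlow γ P ρ0 μ ∧ x = ∑ s, ∑ a, μ s a * r s a}
      = (fun μ : S → A → ℝ => ∑ s, ∑ a, μ s a * r s a) '' {μ | InFlow γ P ρ0 μ} :=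
    Set.ext fun x => exists_congr fun μ => and_congr_right' eq_comm
  have hpolicy : {x | ∃ π, IsPolicy π ∧ x = ∑ s, ∑ a, occ γ P π ρ0 s a * r s a}
      = (fun μ : S → A → ℝ => ∑ s, ∑ a, μ s a * r s a) '' {μ | InFlow γ P ρ0 μ} := by
    rw [← image_occ_eq_setOf_inFlow hγ.1.le hγ.2 hP hρ0, Set.image_image]
    exact Set.ext fun x => exists_congr fun π => and_congr_right' eq_comm
  have hne : {μ | InFlow γ P ρ0 μ}.Nonempty :=
    ⟨_, inFlow_occ hγ.1.le hγ.2 hP (fun _ => isDist_uniform) hρ0⟩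
  obtain ⟨v, hv⟩ := (isCompact_setOf_inFlow.image
    (f := fun μ : S → A → ℝ => ∑ s, ∑ a, μ s a * r s a) (by fun_prop)).exists_isGreatest
    (hne.image _)
  rw [hpolicy, hflow]
  exact ⟨v, hv, hv⟩

/-- The RL objective satisfies `max_π ⟨μ_π, r⟩ = max_{μ ∈ M} ⟨μ, r⟩`: there is a
common value which is the greatest element of both sets of attainable values,
so the RL problem is a linear program over the Bellman flow polytope `M`. -/
theorem stmt5 {S A : Type*} [Fintype S] [Fintype A] [Nonempty S] [Nonempty A]
    (γ : ℝ) (hγ : γ ∈ Set.Ioo (0 : ℝ) 1)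
    (P : S → A → S → ℝ) (hP : IsKernel P)
    (ρ0 : S → ℝ) (hρ0 : IsDist ρ0)
    (r : S → A → ℝ) :
    ∃ v : ℝ,
      IsGreatest {x : ℝ | ∃ π : S → A → ℝ, IsPolicy π ∧
        x = ∑ s : S, ∑ a : A, occ γ P π ρ0 s a * r s a} v ∧
      IsGreatest {x : ℝ | ∃ μ : S → A → ℝ, InFlow γ P ρ0 μ ∧
        x = ∑ s : S, ∑ a : A, μ s a * r s a} v :=
  stmt5_general γ hγ P hP ρ0 hρ0 r
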